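/- Let F = E₈ − Q(∂_x,∂_y), where E₈ = Q(x,y)^{-1} Σ_{j,k} x_j y_k ∂²/(∂x_k ∂y_j), acting on smooth functions on the open set {(x,y) : Q(x,y) ≠ 0}. Then F commutes with multiplication by Q(x) and with multiplication by Q(y): F(Q(x)·f) = Q(x)·F(f) and F(Q(y)·f) = Q(y)·F(f) for all smooth f. -/

import Mathlib

open Real Finset

noncomputable def eps (p : ℕ) {n : ℕ} (j : Fin n) : ℝ := if (j : ℕ) < p then 1 else -1

noncomputable def Qb (p : ℕ) {n : ℕ} (x y : Fin n → ℝ) : ℝ := ∑ j, eps p j * x j * y j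

noncomputable def Qf (p : ℕ) {n : ℕ} (x : Fin n → ℝ) : ℝ := Qb p x x

noncomputable def pd {n : ℕ} (j : Fin n) (f : (Fin n → ℝ) → ℝ) : (Fin n → ℝ) → ℝ :=
  fun x => fderiv ℝ f x (Pi.single j 1)

noncomputable def dalembert (p : ℕ) {n : ℕ} (f : (Fin n → ℝ) → ℝ) : (Fin n → ℝ) → ℝ :=
  fun x => ∑ j, eps p j * pd j (pd j f) x

noncomputable def euler {n : ℕ} (f : (Fin n → ℝ) → ℝ) : (Fin n → ℝ) → ℝ :=
  fun x => ∑ j, x j * pd j f x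

noncomputable def pdx {n : ℕ} (j : Fin n) (f : (Fin n → ℝ) × (Fin n → ℝ) → ℝ) :
    (Fin n → ℝ) × (Fin n → ℝ) → ℝ :=
  fun z => fderiv ℝ f z (Pi.single j 1, 0)

noncomputable def pdy {n : ℕ} (j : Fin n) (f : (Fin n → ℝ) × (Fin n → ℝ) → ℝ) :
    (Fin n → ℝ) × (Fin n → ℝ) → ℝ :=
  fun z => fderiv ℝ f z (0, Pi.single j 1)

/-- The operator `E₈ = Q(x,y)⁻¹ Σ_{j,k} x_j y_k ∂²/(∂x_k ∂y_j)`. -/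
noncomputable def E8 (p : ℕ) {n : ℕ} (f : (Fin n → ℝ) × (Fin n → ℝ) → ℝ) :
    (Fin n → ℝ) × (Fin n → ℝ) → ℝ :=
  fun z => (Qb p z.1 z.2)⁻¹ * ∑ j, ∑ k, z.1 j * z.2 k * pdx k (pdy j f) z

/-- The mixed d'Alembertian `Q(∂_x, ∂_y) = Σ_j ε_j ∂²/(∂x_j ∂y_j)`. -/
noncomputable def boxxy (p : ℕ) {n : ℕ} (f : (Fin n → ℝ) × (Fin n → ℝ) → ℝ) :
    (Fin n → ℝ) × (Fin n → ℝ) → ℝ :=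
  fun z => ∑ j, eps p j * pdx j (pdy j f) z

/-- The d'Alembertian in the `x`-variables. -/
noncomputable def boxx (p : ℕ) {n : ℕ} (f : (Fin n → ℝ) × (Fin n → ℝ) → ℝ) :
    (Fin n → ℝ) × (Fin n → ℝ) → ℝ :=
  fun z => ∑ j, eps p j * pdx j (pdx j f) z

section helpers
variable {n : ℕ}

lemma eps_sq (p : ℕ) (j : Fin n) : eps p j * eps p j = 1 := by
  unfold eps; split <;> norm_num

noncomputable def cx (j : Fin n) : ((Fin n → ℝ) × (Fin n → ℝ)) →L[ℝ] ℝ :=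
  (ContinuousLinearMap.proj j).comp (ContinuousLinearMap.fst ℝ (Fin n → ℝ) (Fin n → ℝ))

noncomputable def cy (j : Fin n) : ((Fin n → ℝ) × (Fin n → ℝ)) →L[ℝ] ℝ :=
  (ContinuousLinearMap.proj j).comp (ContinuousLinearMap.snd ℝ (Fin n → ℝ) (Fin n → ℝ))

lemma cx_apply (j : Fin n) (v : (Fin n → ℝ) × (Fin n → ℝ)) : cx j v = v.1 j := rfl
lemma cy_apply (j : Fin n) (v : (Fin n → ℝ) × (Fin n → ℝ)) : cy j v = v.2 j := rfl

noncomputable def Lx (p : ℕ) (z : (Fin n → ℝ) × (Fin n → ℝ)) :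
    ((Fin n → ℝ) × (Fin n → ℝ)) →L[ℝ] ℝ := ∑ j, (2 * eps p j * z.1 j) • cx j

noncomputable def Ly (p : ℕ) (z : (Fin n → ℝ) × (Fin n → ℝ)) :
    ((Fin n → ℝ) × (Fin n → ℝ)) →L[ℝ] ℝ := ∑ j, (2 * eps p j * z.2 j) • cy j

lemma hasFDerivAt_Qx (p : ℕ) (z : (Fin n → ℝ) × (Fin n → ℝ)) :
    HasFDerivAt (fun w : (Fin n → ℝ) × (Fin n → ℝ) => Qf p w.1) (Lx p z) z := by
  have h : (fun w : (Fin n → ℝ) × (Fin n → ℝ) => Qf p w.1)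
      = fun w => ∑ j, eps p j * w.1 j * w.1 j := by
    funext w; simp [Qf, Qb]
  rw [h]
  unfold Lx
  refine HasFDerivAt.fun_sum fun j _ => ?_
  have hc : HasFDerivAt (fun w : (Fin n → ℝ) × (Fin n → ℝ) => w.1 j) (cx j) z :=
    (cx j).hasFDerivAt
  have h2 := (hc.const_mul (eps p j)).fun_mul hc
  convert h2 using 1
  · rfl
  refine ContinuousLinearMap.ext fun v => ?_
  simp only [ContinuousLinearMap.add_apply, ContinuousLinearMap.smul_apply, smul_eq_mul, cx_apply]
  ring

lemma hasFDerivAt_Qy (p : ℕ) (z : (Fin n → ℝ) × (Fin n → ℝ)) :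
    HasFDerivAt (fun w : (Fin n → ℝ) × (Fin n → ℝ) => Qf p w.2) (Ly p z) z := by
  have h : (fun w : (Fin n → ℝ) × (Fin n → ℝ) => Qf p w.2)
      = fun w => ∑ j, eps p j * w.2 j * w.2 j := by
    funext w; simp [Qf, Qb]
  rw [h]
  unfold Ly
  refine HasFDerivAt.fun_sum fun j _ => ?_
  have hc : HasFDerivAt (fun w : (Fin n → ℝ) × (Fin n → ℝ) => w.2 j) (cy j) z :=
    (cy j).hasFDerivAt
  have h2 := (hc.const_mul (eps p j)).fun_mul hc
  convert h2 using 1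
  · rfl
  refine ContinuousLinearMap.ext fun v => ?_
  simp only [ContinuousLinearMap.add_apply, ContinuousLinearMap.smul_apply, smul_eq_mul, cy_apply]
  ring

lemma Lx_x (p : ℕ) (z : (Fin n → ℝ) × (Fin n → ℝ)) (k : Fin n) :
    Lx p z (Pi.single k 1, (0 : Fin n → ℝ)) = 2 * eps p k * z.1 k := by
  simp [Lx, cx_apply, Pi.single_apply, mul_ite]

lemma Lx_y (p : ℕ) (z : (Fin n → ℝ) × (Fin n → ℝ)) (v : Fin n → ℝ) :
    Lx p z ((0 : Fin n → ℝ), v) = 0 := by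
  simp [Lx, cx_apply]

lemma Ly_y (p : ℕ) (z : (Fin n → ℝ) × (Fin n → ℝ)) (k : Fin n) :
    Ly p z ((0 : Fin n → ℝ), Pi.single k 1) = 2 * eps p k * z.2 k := by
  simp [Ly, cy_apply, Pi.single_apply, mul_ite]

lemma Ly_x (p : ℕ) (z : (Fin n → ℝ) × (Fin n → ℝ)) (v : Fin n → ℝ) :
    Ly p z (v, (0 : Fin n → ℝ)) = 0 := by
  simp [Ly, cy_apply]

lemma isOpen_U (p : ℕ) : IsOpen {z : (Fin n → ℝ) × (Fin n → ℝ) | Qb p z.1 z.2 ≠ 0} := by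
  have hc : Continuous fun z : (Fin n → ℝ) × (Fin n → ℝ) => Qb p z.1 z.2 := by
    unfold Qb; fun_prop
  exact isOpen_compl_singleton.preimage hc

end helpers

/-- `F = E₈ − Q(∂_x,∂_y)` commutes with multiplication by `Q(x)` and by
`Q(y)` on `{Q(x,y) ≠ 0}`. -/
theorem F_commutes (p q n : ℕ) (hp : 1 ≤ p) (hq : 1 ≤ q) (hn : n = p + q)
    (f : (Fin n → ℝ) × (Fin n → ℝ) → ℝ)
    (hf : ContDiffOn ℝ (⊤ : ℕ∞) f {z : (Fin n → ℝ) × (Fin n → ℝ) | Qb p z.1 z.2 ≠ 0})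
    (z : (Fin n → ℝ) × (Fin n → ℝ)) (hz : Qb p z.1 z.2 ≠ 0) :
    (E8 p (fun w => Qf p w.1 * f w) z - boxxy p (fun w => Qf p w.1 * f w) z
        = Qf p z.1 * (E8 p f z - boxxy p f z)) ∧
    (E8 p (fun w => Qf p w.2 * f w) z - boxxy p (fun w => Qf p w.2 * f w) z
        = Qf p z.2 * (E8 p f z - boxxy p f z)) := by
  classical
  have hU : IsOpen {z : (Fin n → ℝ) × (Fin n → ℝ) | Qb p z.1 z.2 ≠ 0} := isOpen_U p
  have hzU : z ∈ {z : (Fin n → ℝ) × (Fin n → ℝ) | Qb p z.1 z.2 ≠ 0} := hz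
  have hfd : ∀ w ∈ {z : (Fin n → ℝ) × (Fin n → ℝ) | Qb p z.1 z.2 ≠ 0},
      DifferentiableAt ℝ f w := fun w hw =>
    (hf.contDiffAt (hU.mem_nhds hw)).differentiableAt (by simp)
  have hfderiv : ContDiffOn ℝ (⊤ : ℕ∞) (fderiv ℝ f)
      {z : (Fin n → ℝ) × (Fin n → ℝ) | Qb p z.1 z.2 ≠ 0} :=
    hf.fderiv_of_isOpen hU (by simp)
  have hpdyd : ∀ (j : Fin n), ∀ w ∈ {z : (Fin n → ℝ) × (Fin n → ℝ) | Qb p z.1 z.2 ≠ 0},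
      DifferentiableAt ℝ (pdy j f) w := by
    intro j w hw
    have h1 : ContDiffOn ℝ (⊤ : ℕ∞)
        (fun w : (Fin n → ℝ) × (Fin n → ℝ) =>
          fderiv ℝ f w ((0 : Fin n → ℝ), Pi.single j 1))
        {z : (Fin n → ℝ) × (Fin n → ℝ) | Qb p z.1 z.2 ≠ 0} :=
      hfderiv.clm_apply contDiffOn_const
    exact (h1.contDiffAt (hU.mem_nhds hw)).differentiableAt (by simp)
  constructor
  · -- Q(x) case
    have hpdyg : ∀ (j : Fin n), ∀ w ∈ {z : (Fin n → ℝ) × (Fin n → ℝ) | Qb p z.1 z.2 ≠ 0},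
        pdy j (fun w => Qf p w.1 * f w) w = Qf p w.1 * pdy j f w := by
      intro j w hw
      have hq := hasFDerivAt_Qx p w
      have hmul := fderiv_fun_mul (𝕜 := ℝ) hq.differentiableAt (hfd w hw)
      rw [hq.fderiv] at hmul
      show fderiv ℝ (fun w => Qf p w.1 * f w) w ((0 : Fin n → ℝ), Pi.single j 1) = _
      rw [hmul]
      simp [pdy, Lx_y]
    have key1 : ∀ (j k : Fin n), pdx k (pdy j (fun w => Qf p w.1 * f w)) z
        = Qf p z.1 * pdx k (pdy j f) z + pdy j f z * (2 * eps p k * z.1 k) := by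
      intro j k
      have hev : pdy j (fun w => Qf p w.1 * f w)
          =ᶠ[nhds z] fun w => Qf p w.1 * pdy j f w :=
        Filter.eventuallyEq_of_mem (hU.mem_nhds hzU) (fun w hw => hpdyg j w hw)
      have hq := hasFDerivAt_Qx p z
      have hmul := fderiv_fun_mul (𝕜 := ℝ) hq.differentiableAt (hpdyd j z hzU)
      rw [hq.fderiv] at hmul
      show fderiv ℝ (pdy j (fun w => Qf p w.1 * f w)) z (Pi.single k 1, (0 : Fin n → ℝ)) = _
      rw [hev.fderiv_eq, hmul]
      simp [pdx, Lx_x]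
    have hsum : ∑ j, ∑ k, z.1 j * z.2 k *
          (Qf p z.1 * pdx k (pdy j f) z + pdy j f z * (2 * eps p k * z.1 k))
        = Qf p z.1 * ∑ j, ∑ k, z.1 j * z.2 k * pdx k (pdy j f) z
          + (2 * ∑ j, z.1 j * pdy j f z) * Qb p z.1 z.2 := by
      rw [Qb]
      simp only [mul_add, Finset.sum_add_distrib, Finset.mul_sum, Finset.sum_mul]
      congr 1
      · exact Finset.sum_congr rfl fun j _ => Finset.sum_congr rfl fun k _ => by ring
      · rw [Finset.sum_comm]
        exact Finset.sum_congr rfl fun j _ => Finset.sum_congr rfl fun k _ => by ring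
    have hE : E8 p (fun w => Qf p w.1 * f w) z
        = Qf p z.1 * E8 p f z + 2 * ∑ j, z.1 j * pdy j f z := by
      unfold E8
      simp only [key1]
      rw [hsum]
      field_simp
    have hB : boxxy p (fun w => Qf p w.1 * f w) z
        = Qf p z.1 * boxxy p f z + 2 * ∑ j, z.1 j * pdy j f z := by
      unfold boxxy
      simp only [key1]
      rw [Finset.mul_sum, Finset.mul_sum, ← Finset.sum_add_distrib]
      refine Finset.sum_congr rfl fun j _ => ?_
      have h := eps_sq p j
      linear_combination (2 * z.1 j * pdy j f z) * h
    rw [hE, hB]; ring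
  · -- Q(y) case
    have hpdyh : ∀ (j : Fin n), ∀ w ∈ {z : (Fin n → ℝ) × (Fin n → ℝ) | Qb p z.1 z.2 ≠ 0},
        pdy j (fun w => Qf p w.2 * f w) w
          = Qf p w.2 * pdy j f w + f w * (2 * eps p j * w.2 j) := by
      intro j w hw
      have hq := hasFDerivAt_Qy p w
      have hmul := fderiv_fun_mul (𝕜 := ℝ) hq.differentiableAt (hfd w hw)
      rw [hq.fderiv] at hmul
      show fderiv ℝ (fun w => Qf p w.2 * f w) w ((0 : Fin n → ℝ), Pi.single j 1) = _
      rw [hmul]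
      simp [pdy, Ly_y]
    have key2 : ∀ (j k : Fin n), pdx k (pdy j (fun w => Qf p w.2 * f w)) z
        = Qf p z.2 * pdx k (pdy j f) z + (2 * eps p j * z.2 j) * pdx k f z := by
      intro j k
      have hev : pdy j (fun w => Qf p w.2 * f w)
          =ᶠ[nhds z] fun w => Qf p w.2 * pdy j f w + f w * (2 * eps p j * w.2 j) :=
        Filter.eventuallyEq_of_mem (hU.mem_nhds hzU) (fun w hw => hpdyh j w hw)
      have hq := hasFDerivAt_Qy p z
      have hc : HasFDerivAt (fun w : (Fin n → ℝ) × (Fin n → ℝ) => w.2 j) (cy j) z :=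
        (cy j).hasFDerivAt
      have hd1 : DifferentiableAt ℝ
          (fun w : (Fin n → ℝ) × (Fin n → ℝ) => Qf p w.2 * pdy j f w) z :=
        hq.differentiableAt.mul (hpdyd j z hzU)
      have hd2 : DifferentiableAt ℝ
          (fun w : (Fin n → ℝ) × (Fin n → ℝ) => f w * (2 * eps p j * w.2 j)) z :=
        (hfd z hzU).mul (hc.const_mul (2 * eps p j)).differentiableAt
      have hmul1 := fderiv_fun_mul (𝕜 := ℝ) hq.differentiableAt (hpdyd j z hzU)
      rw [hq.fderiv] at hmul1
      have hmul2 := fderiv_fun_mul (𝕜 := ℝ) (hfd z hzU)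
        (hc.const_mul (2 * eps p j)).differentiableAt
      rw [(hc.const_mul (2 * eps p j)).fderiv] at hmul2
      show fderiv ℝ (pdy j (fun w => Qf p w.2 * f w)) z (Pi.single k 1, (0 : Fin n → ℝ)) = _
      rw [hev.fderiv_eq, fderiv_fun_add hd1 hd2, hmul1, hmul2]
      simp [pdx, Ly_x, cy_apply]
    have hsum : ∑ j, ∑ k, z.1 j * z.2 k *
          (Qf p z.2 * pdx k (pdy j f) z + (2 * eps p j * z.2 j) * pdx k f z)
        = Qf p z.2 * ∑ j, ∑ k, z.1 j * z.2 k * pdx k (pdy j f) z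
          + (2 * Qb p z.1 z.2) * ∑ k, z.2 k * pdx k f z := by
      rw [Qb]
      simp only [mul_add, Finset.sum_add_distrib, Finset.mul_sum, Finset.sum_mul]
      congr 1
      · exact Finset.sum_congr rfl fun j _ => Finset.sum_congr rfl fun k _ => by ring
      · rw [Finset.sum_comm]
        exact Finset.sum_congr rfl fun j _ => Finset.sum_congr rfl fun k _ => by ring
    have hE : E8 p (fun w => Qf p w.2 * f w) z
        = Qf p z.2 * E8 p f z + 2 * ∑ k, z.2 k * pdx k f z := by
      unfold E8
      simp only [key2]
      rw [hsum]
      field_simp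
    have hB : boxxy p (fun w => Qf p w.2 * f w) z
        = Qf p z.2 * boxxy p f z + 2 * ∑ j, z.2 j * pdx j f z := by
      unfold boxxy
      simp only [key2]
      rw [Finset.mul_sum, Finset.mul_sum, ← Finset.sum_add_distrib]
      refine Finset.sum_congr rfl fun j _ => ?_
      have h := eps_sq p j
      linear_combination (2 * z.2 j * pdx j f z) * h
    rw [hE, hB]; ring
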